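/- arXiv:1610.07770 — 12 statements merged into one kernel-verified Lean document; each statement's English description precedes it below -/
import Mathlib

section
/- Let Ω be a finite set and let f : Finset Ω → ℝ be monotone and submodular. Then the extension f̂ : (Ω → ℝ≥0) → ℝ is monotone and submodular on the lattice of non-negative vectors: (i) if P(u) ≤ Q(u) for all u ∈ Ω then f̂(P) ≤ f̂(Q); (ii) for all non-negative P, Q : Ω → ℝ, f̂(max(P,Q)) + f̂(min(P,Q)) ≤ f̂(P) + f̂(Q), where max and min are taken pointwise. -/
open Finset

/-- The multilinear-style extension `f̂` of a set function `f`: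
the expectation of `f` over the random subset that includes each `u`
independently with probability `1 - exp (-S u)`. -/
noncomputable def fhat {Ω : Type*} [Fintype Ω] [DecidableEq Ω]
    (f : Finset Ω → ℝ) (S : Ω → ℝ) : ℝ :=
  ∑ T : Finset Ω, f T *
    ((∏ u ∈ T, (1 - Real.exp (-S u))) * ∏ u ∈ Tᶜ, Real.exp (-S u))

/- Everything is proved for the multilinear extension `F(p) = E[f(R)]`, where `R` contains each `u`
independently with probability `p u ∈ [0, 1]`: `f̂ = F ∘ (1 - exp (-·))`, and this substitution is
monotone, hence commutes with pointwise `max` and `min`. Splitting off one element `u` gives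
`F = (1 - p u) F₀ + p u F₁`, where `F₀`, `F₁` extend `f` and `T ↦ f (insert u T)` to the smaller
ground set, and both claims follow by induction on the ground set. For submodularity the induction
also needs `F₁ - F₀` to be antitone; it is the extension of the marginal gain of `u`, which
submodularity makes antitone. -/

section MultilinearExt

variable {Ω : Type*} [DecidableEq Ω]

noncomputable def multilinearExt (g : Finset Ω → ℝ) (s : Finset Ω) (p : Ω → ℝ) : ℝ :=
  ∑ T ∈ s.powerset, g T * ((∏ v ∈ T, p v) * ∏ v ∈ s \ T, (1 - p v))

theorem multilinearExt_insert (g : Finset Ω → ℝ) {s : Finset Ω} {u : Ω} (hu : u ∉ s)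
    (p : Ω → ℝ) :
    multilinearExt g (insert u s) p =
      (1 - p u) * multilinearExt g s p + p u * multilinearExt (fun T ↦ g (insert u T)) s p := by
  simp only [multilinearExt, sum_powerset_insert hu, mul_sum]
  congr 1 <;> refine sum_congr rfl fun T hT ↦ ?_
  · have huT : u ∉ T := fun h ↦ hu (mem_powerset.mp hT h)
    rw [insert_sdiff_of_notMem _ huT, prod_insert (by simp [hu])]
    ring
  · have huT : u ∉ T := fun h ↦ hu (mem_powerset.mp hT h)
    rw [insert_sdiff_insert, sdiff_insert_of_notMem hu, prod_insert huT]
    ring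

theorem multilinearExt_sub (g h : Finset Ω → ℝ) (s : Finset Ω) (p : Ω → ℝ) :
    multilinearExt (fun T ↦ g T - h T) s p = multilinearExt g s p - multilinearExt h s p := by
  simp only [multilinearExt, ← sum_sub_distrib, sub_mul]

theorem multilinearExt_neg (g : Finset Ω → ℝ) (s : Finset Ω) (p : Ω → ℝ) :
    multilinearExt (fun T ↦ -g T) s p = -multilinearExt g s p := by
  simp only [multilinearExt, ← sum_neg_distrib, neg_mul]

variable {p q : Ω → ℝ}

theorem multilinearExt_le_multilinearExt {g h : Finset Ω → ℝ} {s : Finset Ω}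
    (hp : p ∈ Set.Icc 0 1) (hgh : ∀ T ⊆ s, g T ≤ h T) :
    multilinearExt g s p ≤ multilinearExt h s p := by
  refine sum_le_sum fun T hT ↦ mul_le_mul_of_nonneg_right (hgh T (mem_powerset.mp hT)) ?_
  exact mul_nonneg (prod_nonneg fun v _ ↦ hp.1 v)
    (prod_nonneg fun v _ ↦ sub_nonneg.mpr (hp.2 v))

theorem multilinearExt_mono {g : Finset Ω → ℝ} {s : Finset Ω} (hg : MonotoneOn g (Set.Iic s))
    (hp : p ∈ Set.Icc 0 1) (hq : q ∈ Set.Icc 0 1) (hpq : p ≤ q) :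
    multilinearExt g s p ≤ multilinearExt g s q := by
  induction s using Finset.induction_on generalizing g with
  | empty => simp [multilinearExt]
  | @insert u s hu ih =>
    have hIic : Set.Iic s ⊆ Set.Iic (insert u s) := Set.Iic_subset_Iic.mpr (subset_insert u s)
    have hX := ih (hg.mono hIic)
    have hY := ih (g := fun T ↦ g (insert u T)) fun A hA B hB hAB ↦
      hg (insert_subset_insert u hA) (insert_subset_insert u hB) (insert_subset_insert u hAB)
    have hXY : multilinearExt g s q ≤ multilinearExt (fun T ↦ g (insert u T)) s q :=
      multilinearExt_le_multilinearExt hq fun T hT ↦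
        hg (hIic hT) (insert_subset_insert u hT) (subset_insert u T)
    rw [multilinearExt_insert g hu, multilinearExt_insert g hu]
    have hpu : 0 ≤ 1 - p u := sub_nonneg.mpr (hp.2 u)
    have hqpu : 0 ≤ q u - p u := sub_nonneg.mpr (hpq u)
    linarith [mul_le_mul_of_nonneg_left hX hpu, mul_le_mul_of_nonneg_left hY (hp.1 u),
      mul_le_mul_of_nonneg_left hXY hqpu]

theorem multilinearExt_anti {g : Finset Ω → ℝ} {s : Finset Ω} (hg : AntitoneOn g (Set.Iic s))
    (hp : p ∈ Set.Icc 0 1) (hq : q ∈ Set.Icc 0 1) (hpq : p ≤ q) :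
    multilinearExt g s q ≤ multilinearExt g s p := by
  simpa only [multilinearExt_neg, neg_le_neg_iff] using multilinearExt_mono hg.neg hp hq hpq

theorem antitoneOn_insert_sub {g : Finset Ω → ℝ}
    (hg : ∀ A B, g (A ∪ B) + g (A ∩ B) ≤ g A + g B) {s : Finset Ω} {u : Ω} (hu : u ∉ s) :
    AntitoneOn (fun T ↦ g (insert u T) - g T) (Set.Iic s) := by
  intro A _ B hB hAB
  have huB : u ∉ B := fun h ↦ hu (hB h)
  have := hg (insert u A) B
  rw [insert_union, union_eq_right.mpr hAB, insert_inter_of_notMem huB,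
    inter_eq_left.mpr hAB] at this
  linarith

theorem multilinearExt_sup_add_inf_le {g : Finset Ω → ℝ}
    (hg : ∀ A B, g (A ∪ B) + g (A ∩ B) ≤ g A + g B) (s : Finset Ω)
    (hp : p ∈ Set.Icc 0 1) (hq : q ∈ Set.Icc 0 1) :
    multilinearExt g s (p ⊔ q) + multilinearExt g s (p ⊓ q) ≤
      multilinearExt g s p + multilinearExt g s q := by
  induction s using Finset.induction_on generalizing g p q with
  | empty => simp [multilinearExt]
  | @insert u s hu ih =>
    wlog hqp : q u ≤ p u generalizing p q with H
    · have := H hq hp (le_of_not_ge hqp)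
      rwa [sup_comm, inf_comm, add_comm (multilinearExt g _ q)] at this
    set gu : Finset Ω → ℝ := fun T ↦ g (insert u T)
    have hgu : ∀ A B, gu (A ∪ B) + gu (A ∩ B) ≤ gu A + gu B := fun A B ↦ by
      simpa only [gu, insert_union_distrib, insert_inter_distrib] using hg (insert u A) (insert u B)
    have hX := ih hg hp hq
    have hY := ih hgu hp hq
    have hinf : p ⊓ q ∈ Set.Icc 0 1 := ⟨le_inf hp.1 hq.1, inf_le_left.trans hp.2⟩
    have hD := multilinearExt_anti (antitoneOn_insert_sub hg hu) hinf hq inf_le_right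
    rw [multilinearExt_sub, multilinearExt_sub] at hD
    simp only [multilinearExt_insert _ hu, Pi.sup_apply, Pi.inf_apply, sup_of_le_left hqp,
      inf_of_le_right hqp]
    -- LHS - RHS = (1 - p u) (defect of F₀) + p u (defect of F₁)
    --   + (p u - q u) ((F₁ - F₀)(q) - (F₁ - F₀)(p ⊓ q))
    have hpu : 0 ≤ 1 - p u := sub_nonneg.mpr (hp.2 u)
    have hpqu : 0 ≤ p u - q u := sub_nonneg.mpr hqp
    linarith [mul_le_mul_of_nonneg_left hX hpu, mul_le_mul_of_nonneg_left hY (hp.1 u),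
      mul_le_mul_of_nonneg_left hD hpqu]

end MultilinearExt

theorem fhat_eq_multilinearExt {Ω : Type*} [Fintype Ω] [DecidableEq Ω] (f : Finset Ω → ℝ)
    (S : Ω → ℝ) : fhat f S = multilinearExt f univ (fun u ↦ 1 - Real.exp (-S u)) := by
  simp only [fhat, multilinearExt, powerset_univ, compl_eq_univ_sdiff, sub_sub_cancel]

theorem one_sub_exp_neg_mem_Icc {x : ℝ} (hx : 0 ≤ x) : 1 - Real.exp (-x) ∈ Set.Icc 0 1 :=
  ⟨sub_nonneg.mpr (Real.exp_le_one_iff.mpr (neg_nonpos.mpr hx)),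
    sub_le_self _ (Real.exp_pos _).le⟩

theorem monotone_one_sub_exp_neg : Monotone fun x : ℝ ↦ 1 - Real.exp (-x) :=
  fun _ _ h ↦ sub_le_sub_left (Real.exp_le_exp.mpr (neg_le_neg h)) 1

/-- If `f` is monotone and submodular, then `f̂` is monotone and submodular
on the lattice of non-negative vectors. -/
theorem fhat_monotone_and_submodular {Ω : Type*} [Fintype Ω] [DecidableEq Ω]
    (f : Finset Ω → ℝ)
    (hmono : ∀ A B : Finset Ω, A ⊆ B → f A ≤ f B)
    (hsub : ∀ A B : Finset Ω, f (A ∪ B) + f (A ∩ B) ≤ f A + f B) :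
    (∀ P Q : Ω → ℝ, (∀ u, 0 ≤ P u) → (∀ u, 0 ≤ Q u) → (∀ u, P u ≤ Q u) →
      fhat f P ≤ fhat f Q) ∧
    (∀ P Q : Ω → ℝ, (∀ u, 0 ≤ P u) → (∀ u, 0 ≤ Q u) →
      fhat f (fun u => max (P u) (Q u)) + fhat f (fun u => min (P u) (Q u)) ≤
        fhat f P + fhat f Q) := by
  have hIcc (P : Ω → ℝ) (hP : ∀ u, 0 ≤ P u) : (fun u ↦ 1 - Real.exp (-P u)) ∈ Set.Icc 0 1 :=
    ⟨fun u ↦ (one_sub_exp_neg_mem_Icc (hP u)).1, fun u ↦ (one_sub_exp_neg_mem_Icc (hP u)).2⟩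
  simp only [fhat_eq_multilinearExt]
  refine ⟨fun P Q hP hQ hPQ ↦ ?_, fun P Q hP hQ ↦ ?_⟩
  · exact multilinearExt_mono (fun A _ B _ hAB ↦ hmono A B hAB) (hIcc P hP) (hIcc Q hQ)
      fun u ↦ monotone_one_sub_exp_neg (hPQ u)
  · convert multilinearExt_sup_add_inf_le hsub univ (hIcc P hP) (hIcc Q hQ) using 3
    · exact funext fun u ↦ monotone_one_sub_exp_neg.map_max
    · exact funext fun u ↦ monotone_one_sub_exp_neg.map_min
end

section
/- Let Ω be a finite set and let f : Finset Ω → ℝ be monotone and submodular. Then for every subset O ⊆ Ω and every non-negative vector A : Ω → ℝ, f(O) ≤ f̂(A) + ∑_{v ∈ O} f̂(v | A). -/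
open Finset

/-- The marginal value `f̂(v | S)` of element `v` with respect to the vector `S`. -/
noncomputable def fhatMarginal {Ω : Type*} [Fintype Ω] [DecidableEq Ω]
    (f : Finset Ω → ℝ) (S : Ω → ℝ) (v : Ω) : ℝ :=
  Real.exp (-S v) *
    ∑ T ∈ ((Finset.univ : Finset Ω).erase v).powerset,
      (f (insert v T) - f T) *
        ((∏ u ∈ T, (1 - Real.exp (-S u))) *
          ∏ u ∈ ((Finset.univ : Finset Ω).erase v) \ T, Real.exp (-S u))

section Aux
variable {Ω : Type*} [Fintype Ω] [DecidableEq Ω]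

lemma weight_nonneg (A : Ω → ℝ) (hA : ∀ u, 0 ≤ A u) (T : Finset Ω) :
    0 ≤ (∏ u ∈ T, (1 - Real.exp (-A u))) * ∏ u ∈ Tᶜ, Real.exp (-A u) := by
  apply mul_nonneg
  · refine Finset.prod_nonneg fun u _ => ?_
    have h : Real.exp (-A u) ≤ 1 := Real.exp_le_one_iff.mpr (neg_nonpos.mpr (hA u))
    linarith
  · exact Finset.prod_nonneg fun u _ => (Real.exp_pos _).le

lemma weight_sum (A : Ω → ℝ) :
    ∑ T : Finset Ω, (∏ u ∈ T, (1 - Real.exp (-A u))) * ∏ u ∈ Tᶜ, Real.exp (-A u) = 1 := by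
  have : ∀ T : Finset Ω, (∏ u ∈ Tᶜ, Real.exp (-A u)) = ∏ u ∈ univ \ T, Real.exp (-A u) := by
    intro T; rw [Finset.compl_eq_univ_sdiff]
  simp_rw [this]
  rw [← Finset.powerset_univ, ← Finset.prod_add]
  simp

lemma pointwise_bound (f : Finset Ω → ℝ)
    (hmono : ∀ A B : Finset Ω, A ⊆ B → f A ≤ f B)
    (hsub : ∀ A B : Finset Ω, f (A ∪ B) + f (A ∩ B) ≤ f A + f B)
    (O T : Finset Ω) :
    f O ≤ f T + ∑ v ∈ O \ T, (f (insert v T) - f T) := by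
  have key : ∀ O : Finset Ω, f (T ∪ O) ≤ f T + ∑ v ∈ O \ T, (f (insert v T) - f T) := by
    intro O
    induction O using Finset.induction_on with
    | empty => simp
    | @insert a O ha ih =>
      by_cases haT : a ∈ T
      · have h1 : T ∪ insert a O = T ∪ O := by
          rw [Finset.union_insert, Finset.insert_eq_self.mpr (Finset.mem_union_left _ haT)]
        have h2 : insert a O \ T = O \ T := Finset.insert_sdiff_of_mem _ haT
        rw [h1, h2]; exact ih
      · have h1 : T ∪ insert a O = insert a (T ∪ O) := Finset.union_insert _ _ _
        have h2 : insert a O \ T = insert a (O \ T) :=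
          Finset.insert_sdiff_of_notMem _ haT
        have h3 : a ∉ O \ T := fun h => ha (Finset.mem_sdiff.mp h).1
        rw [h1, h2, Finset.sum_insert h3]
        have hinter : (insert a T) ∩ (T ∪ O) = T := by
          ext x
          simp only [Finset.mem_inter, Finset.mem_insert, Finset.mem_union]
          constructor
          · rintro ⟨h1 | h1, h2 | h2⟩ <;> first | exact h1 | (subst h1; tauto) | assumption
          · intro h; exact ⟨Or.inr h, Or.inl h⟩
        have := hsub (insert a T) (T ∪ O)
        rw [Finset.insert_union, ← Finset.union_assoc, Finset.union_self, hinter] at this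
        linarith
  calc f O ≤ f (T ∪ O) := hmono _ _ Finset.subset_union_right
    _ ≤ _ := key O

lemma marginal_eq (f : Finset Ω → ℝ) (A : Ω → ℝ) (v : Ω) :
    ∑ T : Finset Ω, (if v ∈ T then 0 else
      (f (insert v T) - f T) *
        ((∏ u ∈ T, (1 - Real.exp (-A u))) * ∏ u ∈ Tᶜ, Real.exp (-A u)))
    = fhatMarginal f A v := by
  have hset : (Finset.univ : Finset (Finset Ω)).filter (fun T => v ∉ T)
      = ((Finset.univ : Finset Ω).erase v).powerset := by
    ext T
    simp [Finset.mem_powerset, Finset.subset_erase]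
  rw [fhatMarginal, Finset.mul_sum]
  have : ∑ T : Finset Ω, (if v ∈ T then 0 else
      (f (insert v T) - f T) *
        ((∏ u ∈ T, (1 - Real.exp (-A u))) * ∏ u ∈ Tᶜ, Real.exp (-A u)))
      = ∑ T ∈ (Finset.univ : Finset (Finset Ω)).filter (fun T => v ∉ T),
        (f (insert v T) - f T) *
          ((∏ u ∈ T, (1 - Real.exp (-A u))) * ∏ u ∈ Tᶜ, Real.exp (-A u)) := by
    rw [Finset.sum_filter]
    refine Finset.sum_congr rfl fun T _ => ?_
    by_cases h : v ∈ T <;> simp [h]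
  rw [this, hset]
  refine Finset.sum_congr rfl fun T hT => ?_
  rw [Finset.mem_powerset, Finset.subset_erase] at hT
  have hcompl : Tᶜ = insert v (((Finset.univ : Finset Ω).erase v) \ T) := by
    rw [Finset.compl_eq_univ_sdiff, ← Finset.insert_sdiff_of_notMem _ hT.2,
      Finset.insert_erase (Finset.mem_univ v)]
  have hvnot : v ∉ ((Finset.univ : Finset Ω).erase v) \ T := by
    simp
  rw [hcompl, Finset.prod_insert hvnot]
  ring

end Aux

/-- For monotone submodular `f`, any set `O` and non-negative vector `A`:
`f(O) ≤ f̂(A) + ∑_{v ∈ O} f̂(v | A)`. -/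
theorem f_le_fhat_add_marginals {Ω : Type*} [Fintype Ω] [DecidableEq Ω]
    (f : Finset Ω → ℝ)
    (hmono : ∀ A B : Finset Ω, A ⊆ B → f A ≤ f B)
    (hsub : ∀ A B : Finset Ω, f (A ∪ B) + f (A ∩ B) ≤ f A + f B)
    (O : Finset Ω) (A : Ω → ℝ) (hA : ∀ u, 0 ≤ A u) :
    f O ≤ fhat f A + ∑ v ∈ O, fhatMarginal f A v := by
  set w : Finset Ω → ℝ := fun T =>
    (∏ u ∈ T, (1 - Real.exp (-A u))) * ∏ u ∈ Tᶜ, Real.exp (-A u) with hw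
  have h1 : f O = ∑ T : Finset Ω, w T * f O := by
    rw [← Finset.sum_mul, weight_sum A, one_mul]
  have h2 : ∀ T : Finset Ω,
      w T * f O ≤ w T * (f T + ∑ v ∈ O, (if v ∈ T then 0 else f (insert v T) - f T)) := by
    intro T
    apply mul_le_mul_of_nonneg_left _ (weight_nonneg A hA T)
    have := pointwise_bound f hmono hsub O T
    have hsum : ∑ v ∈ O \ T, (f (insert v T) - f T)
        = ∑ v ∈ O, (if v ∈ T then 0 else f (insert v T) - f T) := by
      rw [Finset.sdiff_eq_filter, Finset.sum_filter]
      refine Finset.sum_congr rfl fun v _ => ?_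
      by_cases h : v ∈ T <;> simp [h]
    linarith [hsum ▸ this]
  calc f O = ∑ T : Finset Ω, w T * f O := h1
    _ ≤ ∑ T : Finset Ω, w T * (f T + ∑ v ∈ O, (if v ∈ T then 0 else f (insert v T) - f T)) :=
        Finset.sum_le_sum fun T _ => h2 T
    _ = fhat f A + ∑ v ∈ O, fhatMarginal f A v := by
        simp_rw [mul_add, Finset.sum_add_distrib, Finset.mul_sum]
        congr 1
        · rw [fhat]; exact Finset.sum_congr rfl fun T _ => by ring
        · rw [Finset.sum_comm]
          refine Finset.sum_congr rfl fun v _ => ?_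
          rw [← marginal_eq f A v]
          refine Finset.sum_congr rfl fun T _ => ?_
          by_cases h : v ∈ T <;> simp [h, hw] <;> ring
end

section
/- Let U be a finite set with |U| = n ≥ 1, let g : Finset U → ℝ be submodular, let k be an integer with 0 ≤ k ≤ n, and set p := k/n. Then the expected value of g over a uniformly random k-element subset of U is at least its expected value over an independent sample with probability p; that is, (1 / C(n,k)) · ∑_{T ⊆ U, |T| = k} g(T) ≥ ∑_{T ⊆ U} p^{|T|} (1−p)^{n−|T|} g(T). -/
/-!
Let `a j` be the average of `g` over the `j`-subsets of `U`. Summing the submodularity inequality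
`g A + g B ≤ g (B ∪ {x}) + g (B ∪ {y})` over all pairs `B ⊆ A` with `A \ B = {x, y}` shows that
`a` is concave on `{0, …, n}`. Grouping independent sampling by the size of the sample writes its
expectation as `∑ j, P(Bin(n, p) = j) * a j`, and since the binomial law has mean `n p = k`,
Jensen's inequality for the concave sequence `a` bounds this by `a k`.
-/

open Finset

section ConcaveSequence

variable {a : ℕ → ℝ} {n k : ℕ}

lemma le_add_mul_sub_of_forall_sub_le {s : ℝ}
    (hlt : ∀ i < k, s ≤ a (i + 1) - a i) (hge : ∀ i, k ≤ i → i < n → a (i + 1) - a i ≤ s) :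
    ∀ j ≤ n, a j ≤ a k + s * ((j : ℝ) - k) := by
  intro j hj
  rcases le_or_gt k j with hkj | hjk
  · induction j, hkj using Nat.le_induction with
    | base => simp
    | succ j hkj ih =>
      have := hge j hkj (by omega)
      push_cast
      linarith [ih (by omega)]
  · refine Nat.decreasingInduction (motive := fun j _ ↦ a j ≤ a k + s * ((j : ℝ) - k))
      (fun i hik ih ↦ ?_) (by simp) hjk.le
    have := hlt i hik
    push_cast at ih
    linarith

lemma exists_le_add_mul_sub_of_antitoneOn (ha : AntitoneOn (fun i ↦ a (i + 1) - a i) (Set.Iio n))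
    (hk : k ≤ n) : ∃ s : ℝ, ∀ j ≤ n, a j ≤ a k + s * ((j : ℝ) - k) := by
  cases k with
  | zero =>
    exact ⟨a 1 - a 0, le_add_mul_sub_of_forall_sub_le (by simp) fun i _ hi ↦
      ha (show 0 < n by omega) hi (Nat.zero_le i)⟩
  | succ m =>
    exact ⟨a (m + 1) - a m, le_add_mul_sub_of_forall_sub_le
      (fun i hi ↦ ha (show i < n by omega) (show m < n by omega) (by omega))
      fun i hi hin ↦ ha (show m < n by omega) hin (by omega)⟩

lemma sum_mul_le_of_antitoneOn (ha : AntitoneOn (fun i ↦ a (i + 1) - a i) (Set.Iio n))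
    (hk : k ≤ n) {w : ℕ → ℝ} (hw : ∀ j ∈ range (n + 1), 0 ≤ w j)
    (hw₁ : ∑ j ∈ range (n + 1), w j = 1) (hwk : ∑ j ∈ range (n + 1), w j * j = k) :
    ∑ j ∈ range (n + 1), w j * a j ≤ a k := by
  obtain ⟨s, hs⟩ := exists_le_add_mul_sub_of_antitoneOn ha hk
  calc ∑ j ∈ range (n + 1), w j * a j
      ≤ ∑ j ∈ range (n + 1), w j * (a k + s * ((j : ℝ) - k)) :=
        sum_le_sum fun j hj ↦
          mul_le_mul_of_nonneg_left (hs j (by simpa [Nat.lt_succ_iff] using hj)) (hw j hj)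
    _ = a k * ∑ j ∈ range (n + 1), w j +
          s * (∑ j ∈ range (n + 1), w j * j - k * ∑ j ∈ range (n + 1), w j) := by
        simp only [mul_sum, ← sum_sub_distrib, ← sum_add_distrib]
        exact sum_congr rfl fun j _ ↦ by ring
    _ = a k := by rw [hw₁, hwk]; ring

end ConcaveSequence

namespace bernsteinPolynomial

lemma eval_eq {R : Type*} [CommRing R] (n ν : ℕ) (x : R) :
    (bernsteinPolynomial R n ν).eval x = n.choose ν * x ^ ν * (1 - x) ^ (n - ν) := by
  simp [bernsteinPolynomial]

lemma eval_nonneg (n ν : ℕ) {x : ℝ} (h₀ : 0 ≤ x) (h₁ : x ≤ 1) :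
    0 ≤ (bernsteinPolynomial ℝ n ν).eval x := by
  have : 0 ≤ 1 - x := sub_nonneg.mpr h₁
  rw [eval_eq]
  positivity

lemma sum_eval (n : ℕ) (x : ℝ) : ∑ ν ∈ range (n + 1), (bernsteinPolynomial ℝ n ν).eval x = 1 := by
  simpa [Polynomial.eval_finsetSum] using congrArg (Polynomial.eval x) (sum ℝ n)

lemma sum_eval_mul (n : ℕ) (x : ℝ) :
    ∑ ν ∈ range (n + 1), (bernsteinPolynomial ℝ n ν).eval x * ν = n * x := by
  simpa [Polynomial.eval_finsetSum, mul_comm] using congrArg (Polynomial.eval x) (sum_smul ℝ n)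

end bernsteinPolynomial

section Counting

variable {U β : Type*} [DecidableEq U] [AddCommMonoid β]

lemma sum_powersetCard_sum_powersetCard (s : Finset U) (f : Finset U → β) {r m : ℕ}
    (hrm : r ≤ m) :
    ∑ A ∈ s.powersetCard m, ∑ B ∈ A.powersetCard r, f B =
      (#s - r).choose (m - r) • ∑ B ∈ s.powersetCard r, f B := by
  rw [sum_comm' (t' := s.powersetCard r) (s' := fun B ↦ (s.powersetCard m).filter (B ⊆ ·))]
  · rw [smul_sum]
    refine sum_congr rfl fun B hB ↦ ?_
    obtain ⟨hBs, rfl⟩ := mem_powersetCard.mp hB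
    rw [sum_const, card_filter_powersetCard_subset B s m hBs hrm]
  · intro A B
    simp only [mem_powersetCard, mem_filter]
    constructor
    · rintro ⟨⟨hAs, rfl⟩, hBA, rfl⟩
      exact ⟨⟨⟨hAs, rfl⟩, hBA⟩, hBA.trans hAs, rfl⟩
    · rintro ⟨⟨⟨hAs, rfl⟩, hBA⟩, -, rfl⟩
      exact ⟨⟨hAs, rfl⟩, hBA, rfl⟩

lemma sum_powersetCard_sum_sdiff_insert (A : Finset U) (f : Finset U → β) (r : ℕ) :
    ∑ B ∈ A.powersetCard r, ∑ x ∈ A \ B, f (insert x B) =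
      (r + 1) • ∑ C ∈ A.powersetCard (r + 1), f C := by
  have hC : ∀ C ∈ A.powersetCard (r + 1), (r + 1) • f C = ∑ _x ∈ C, f C := fun C hC ↦ by
    rw [sum_const, (mem_powersetCard.mp hC).2]
  rw [smul_sum, sum_congr rfl hC, sum_sigma', sum_sigma']
  refine sum_nbij' (fun q ↦ ⟨insert q.2 q.1, q.2⟩) (fun q ↦ ⟨q.1.erase q.2, q.2⟩)
    ?_ ?_ ?_ ?_ fun _ _ ↦ rfl
  · rintro ⟨B, x⟩ hq
    simp only [mem_sigma, mem_powersetCard, mem_sdiff] at hq ⊢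
    obtain ⟨⟨hBA, rfl⟩, hxA, hxB⟩ := hq
    exact ⟨⟨insert_subset hxA hBA, card_insert_of_notMem hxB⟩, mem_insert_self x B⟩
  · rintro ⟨C, x⟩ hq
    simp only [mem_sigma, mem_powersetCard, mem_sdiff] at hq ⊢
    obtain ⟨⟨hCA, hCr⟩, hxC⟩ := hq
    exact ⟨⟨(erase_subset x C).trans hCA, by rw [card_erase_of_mem hxC, hCr]; rfl⟩,
      hCA hxC, notMem_erase x C⟩
  · rintro ⟨B, x⟩ hq
    simp only [mem_sigma, mem_powersetCard, mem_sdiff] at hq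
    simp [erase_insert hq.2.2]
  · rintro ⟨C, x⟩ hq
    simp only [mem_sigma, mem_powersetCard] at hq
    simp [insert_erase hq.2]

end Counting

def Submodular {U : Type*} [DecidableEq U] (g : Finset U → ℝ) : Prop :=
  ∀ A B : Finset U, g (A ∪ B) + g (A ∩ B) ≤ g A + g B

section Submodular

variable {U : Type*} [DecidableEq U] {g : Finset U → ℝ}

lemma Submodular.insert_insert_add_le (hg : Submodular g) (B : Finset U) {x y : U}
    (hxy : x ≠ y) :
    g (insert x (insert y B)) + g B ≤ g (insert x B) + g (insert y B) := by
  have hunion : insert x B ∪ insert y B = insert x (insert y B) := by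
    ext; simp only [mem_union, mem_insert]; tauto
  have hinter : insert x B ∩ insert y B = B := by
    ext z; simp only [mem_inter, mem_insert]
    constructor
    · rintro ⟨rfl | hz, rfl | hz'⟩ <;> first | assumption | exact absurd rfl hxy
    · exact fun hz ↦ ⟨Or.inr hz, Or.inr hz⟩
  simpa only [hunion, hinter] using hg (insert x B) (insert y B)

lemma Submodular.add_le_sum_sdiff (hg : Submodular g) {A B : Finset U} (hBA : B ⊆ A)
    (hAB : #(A \ B) = 2) : g A + g B ≤ ∑ x ∈ A \ B, g (insert x B) := by
  obtain ⟨x, y, hxy, hxy'⟩ := card_eq_two.mp hAB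
  have hA : A = insert x (insert y B) := by
    rw [← union_sdiff_of_subset hBA, hxy']
    ext; simp only [mem_union, mem_insert, mem_singleton]; tauto
  rw [hxy', sum_pair hxy, hA]
  exact hg.insert_insert_add_le B hxy

end Submodular

section Layers

variable {U : Type*} [Fintype U] {g : Finset U → ℝ}

noncomputable def layerSum (g : Finset U → ℝ) (m : ℕ) : ℝ :=
  ∑ T ∈ univ.powersetCard m, g T

noncomputable def layerAvg (g : Finset U → ℝ) (m : ℕ) : ℝ :=
  layerSum g m / (Fintype.card U).choose m

lemma choose_mul_layerAvg {m : ℕ} (hm : m ≤ Fintype.card U) :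
    (Fintype.card U).choose m * layerAvg g m = layerSum g m :=
  mul_div_cancel₀ _ (Nat.cast_ne_zero.mpr (Nat.choose_ne_zero hm))

lemma sum_pow_mul_pow_mul_eq_sum_bernstein (g : Finset U → ℝ) (p : ℝ) :
    ∑ T : Finset U, p ^ #T * (1 - p) ^ (Fintype.card U - #T) * g T =
      ∑ j ∈ range (Fintype.card U + 1),
        (bernsteinPolynomial ℝ (Fintype.card U) j).eval p * layerAvg g j := by
  rw [← powerset_univ, sum_powerset, card_univ]
  refine sum_congr rfl fun j hj ↦ ?_
  have hcard : ∀ T ∈ univ.powersetCard j, p ^ #T * (1 - p) ^ (Fintype.card U - #T) * g T =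
      p ^ j * (1 - p) ^ (Fintype.card U - j) * g T := fun T hT ↦ by
    rw [(mem_powersetCard.mp hT).2]
  rw [sum_congr rfl hcard, ← mul_sum, ← layerSum,
    ← choose_mul_layerAvg (Nat.lt_succ_iff.mp (mem_range.mp hj)), bernsteinPolynomial.eval_eq]
  ring

variable [DecidableEq U]

lemma Submodular.choose_mul_layerSum_add_le (hg : Submodular g) (i : ℕ) :
    ((i + 2).choose i : ℝ) * layerSum g (i + 2) +
        ((Fintype.card U - i).choose 2 : ℝ) * layerSum g i ≤
      ((i + 1) * (Fintype.card U - (i + 1)) : ℕ) * layerSum g (i + 1) := by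
  calc ((i + 2).choose i : ℝ) * layerSum g (i + 2) +
        ((Fintype.card U - i).choose 2 : ℝ) * layerSum g i
      = ∑ A ∈ univ.powersetCard (i + 2), ∑ B ∈ A.powersetCard i, (g A + g B) := by
        have hA : ∀ A ∈ univ.powersetCard (i + 2), ∑ B ∈ A.powersetCard i, g A =
            ((i + 2).choose i : ℝ) * g A := fun A hA ↦ by
          rw [sum_const, card_powersetCard, (mem_powersetCard.mp hA).2, nsmul_eq_mul]
        rw [sum_congr rfl fun A _ ↦ sum_add_distrib, sum_add_distrib, sum_congr rfl hA,
          sum_powersetCard_sum_powersetCard _ g (by omega), ← mul_sum, card_univ, nsmul_eq_mul,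
          Nat.add_sub_cancel_left]
        rfl
    _ ≤ ∑ A ∈ univ.powersetCard (i + 2), ∑ B ∈ A.powersetCard i, ∑ x ∈ A \ B, g (insert x B) := by
        refine sum_le_sum fun A hA ↦ sum_le_sum fun B hB ↦ ?_
        obtain ⟨-, hA⟩ := mem_powersetCard.mp hA
        obtain ⟨hBA, hB⟩ := mem_powersetCard.mp hB
        exact hg.add_le_sum_sdiff hBA (by rw [card_sdiff_of_subset hBA, hA, hB]; omega)
    _ = ((i + 1) * (Fintype.card U - (i + 1)) : ℕ) * layerSum g (i + 1) := by
        rw [sum_congr rfl fun A _ ↦ sum_powersetCard_sum_sdiff_insert A g i, ← smul_sum,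
          sum_powersetCard_sum_powersetCard _ g (by omega), card_univ, smul_smul, nsmul_eq_mul]
        simp [layerSum]

lemma Submodular.antitoneOn_layerAvg_sub (hg : Submodular g) :
    AntitoneOn (fun i ↦ layerAvg g (i + 1) - layerAvg g i) (Set.Iio (Fintype.card U)) := by
  refine antitoneOn_of_add_one_le Set.ordConnected_Iio fun i _ _ hi ↦ ?_
  set n := Fintype.card U
  simp only [Set.mem_Iio] at hi
  have hcount := hg.choose_mul_layerSum_add_le i
  rw [← choose_mul_layerAvg (by omega), ← choose_mul_layerAvg (by omega),
    ← choose_mul_layerAvg (by omega)] at hcount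
  -- `N` counts the pairs `B ⊆ A` with `#B = i` and `#A = i + 2`.
  set N : ℕ := n.choose (i + 2) * (i + 2).choose i
  have hN : N = n.choose i * (n - i).choose 2 := by
    simpa using Nat.choose_mul (n := n) (show i ≤ i + 2 by omega)
  have h2N : (i + 1) * (n - (i + 1)) * n.choose (i + 1) = 2 * N := by
    have h₁ : n.choose (i + 2) * (i + 2) = n.choose (i + 1) * (n - (i + 1)) :=
      Nat.choose_succ_right_eq n (i + 1)
    have h₂ : (i + 2).choose i * 2 = (i + 2) * (i + 1) := by
      rw [Nat.choose_symm_of_eq_add rfl, ← Nat.add_one_mul_choose_eq, Nat.choose_one_right]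
    simp only [N]
    nlinarith [h₁, h₂]
  have hNpos : (0 : ℝ) < N :=
    Nat.cast_pos.mpr (Nat.mul_pos (Nat.choose_pos (by omega)) (Nat.choose_pos (by omega)))
  have hN₁ : (n.choose (i + 2) : ℝ) * (i + 2).choose i = N := by simp [N]
  have hN₂ : (n.choose i : ℝ) * (n - i).choose 2 = N := by exact_mod_cast hN.symm
  have hN₃ : (((i + 1) * (n - (i + 1)) : ℕ) : ℝ) * n.choose (i + 1) = 2 * N := by
    exact_mod_cast h2N
  have key : (N : ℝ) * (layerAvg g (i + 2) + layerAvg g i) ≤ N * (2 * layerAvg g (i + 1)) := by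
    linear_combination
      hcount - layerAvg g (i + 2) * hN₁ - layerAvg g i * hN₂ + layerAvg g (i + 1) * hN₃
  linarith [le_of_mul_le_mul_left key hNpos]

end Layers

theorem avg_powersetCard_ge_independent_sampling_general
    {U : Type*} [Fintype U] [DecidableEq U]
    (g : Finset U → ℝ)
    (hsub : ∀ A B : Finset U, g (A ∪ B) + g (A ∩ B) ≤ g A + g B)
    (n k : ℕ) (hcard : Fintype.card U = n) (hk : k ≤ n)
    (p : ℝ) (hp : p = (k : ℝ) / (n : ℝ)) :
    ∑ T : Finset U, p ^ T.card * (1 - p) ^ (n - T.card) * g T ≤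
      (1 / (n.choose k : ℝ)) *
        ∑ T ∈ (Finset.univ : Finset U).powersetCard k, g T := by
  subst hcard
  have hp₀ : 0 ≤ p := hp ▸ by positivity
  have hp₁ : p ≤ 1 := hp ▸ div_le_one_of_le₀ (by exact_mod_cast hk) (by positivity)
  have hmean : (Fintype.card U : ℝ) * p = k := by
    rcases Nat.eq_zero_or_pos (Fintype.card U) with h | h
    · obtain rfl : k = 0 := by omega
      simp [h]
    · rw [hp, mul_div_cancel₀ _ (by positivity)]
  rw [sum_pow_mul_pow_mul_eq_sum_bernstein, one_div_mul_eq_div]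
  exact sum_mul_le_of_antitoneOn (Submodular.antitoneOn_layerAvg_sub hsub) hk
    (fun j _ ↦ bernsteinPolynomial.eval_nonneg _ _ hp₀ hp₁) (bernsteinPolynomial.sum_eval _ _)
    (by rw [bernsteinPolynomial.sum_eval_mul, hmean])

/-- Sampling without replacement dominates independent sampling for submodular
functions: the average of a submodular `g` over uniformly random `k`-subsets of a
ground set of size `n` is at least the expectation of `g` under independent
sampling with probability `p = k / n`. -/
theorem avg_powersetCard_ge_independent_sampling
    {U : Type*} [Fintype U] [DecidableEq U]
    (g : Finset U → ℝ)
    (hsub : ∀ A B : Finset U, g (A ∪ B) + g (A ∩ B) ≤ g A + g B)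
    (n k : ℕ) (hn : 1 ≤ n) (hcard : Fintype.card U = n) (hk : k ≤ n)
    (p : ℝ) (hp : p = (k : ℝ) / (n : ℝ)) :
    ∑ T : Finset U, p ^ T.card * (1 - p) ^ (n - T.card) * g T ≤
      (1 / (n.choose k : ℝ)) *
        ∑ T ∈ (Finset.univ : Finset U).powersetCard k, g T :=
  avg_powersetCard_ge_independent_sampling_general g hsub n k hcard hk p hp
end

section
/- Let U be a finite set with |U| = n, let g : Finset U → ℝ be submodular, and for 0 ≤ i ≤ n define g_i := (1 / C(n,i)) · ∑_{T ⊆ U, |T| = i} g(T), the average of g over all i-element subsets of U. Then for every integer i with 2 ≤ i ≤ n, g_i + g_{i−2} ≤ 2 · g_{i−1}. -/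
/-!
For an `i`-set `S` and `x ≠ y` in `S`, submodularity applied to `S \ {x}` and `S \ {y}` gives
`g S + g (S \ {x, y}) ≤ g (S \ {x}) + g (S \ {y})`. Summing over all `i`-sets and ordered pairs
`x ≠ y` and double counting, the level sums `L_j = ∑_{|T| = j} g T` satisfy
`i (i-1) L_i + (n-i+2) (n-i+1) L_{i-2} ≤ 2 (i-1) (n-i+1) L_{i-1}`. The three coefficients are
`D / C(n,i)`, `D / C(n,i-2)` and `2 D / C(n,i-1)` for the single constant
`D = (i-1) (n-i+1) C(n,i-1)`, so dividing by `D` gives the inequality for the averages.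
-/

open Finset

section Counting

variable {U M : Type*} [DecidableEq U] [AddCommMonoid M]

def eraseSum (f : Finset U → M) (S : Finset U) : M := ∑ x ∈ S, f (S.erase x)

theorem sum_sum_erase_eq_card_sub_one_nsmul_left (S : Finset U) (h : U → M) :
    ∑ x ∈ S, ∑ _y ∈ S.erase x, h x = (#S - 1) • ∑ x ∈ S, h x := by
  rw [smul_sum]
  exact sum_congr rfl fun x hx => by rw [sum_const, card_erase_of_mem hx]

theorem sum_sum_erase_eq_card_sub_one_nsmul_right (S : Finset U) (h : U → M) :
    ∑ x ∈ S, ∑ y ∈ S.erase x, h y = (#S - 1) • ∑ y ∈ S, h y := by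
  rw [sum_comm' (t' := S) (s' := fun y => S.erase y) (by grind)]
  exact sum_sum_erase_eq_card_sub_one_nsmul_left S h

theorem sum_powersetCard_succ_eraseSum [Fintype U] (k : ℕ) (f : Finset U → M) :
    ∑ S ∈ univ.powersetCard (k + 1), eraseSum f S =
      (Fintype.card U - k) • ∑ A ∈ univ.powersetCard k, f A := by
  have hreindex : ∑ S ∈ univ.powersetCard (k + 1), eraseSum f S =
      ∑ A ∈ univ.powersetCard k, ∑ _x ∈ Aᶜ, f A := by
    simp only [eraseSum]
    rw [sum_sigma', sum_sigma']
    refine sum_nbij' (fun p => ⟨p.1.erase p.2, p.2⟩) (fun p => ⟨insert p.2 p.1, p.2⟩)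
      ?_ ?_ ?_ ?_ fun _ _ => rfl
    all_goals
      rintro ⟨S, x⟩ hp
      simp only [mem_sigma, mem_powersetCard_univ, mem_compl] at hp ⊢
    · grind
    · grind
    · simp [insert_erase hp.2]
    · simp [erase_insert hp.2]
  rw [hreindex, smul_sum]
  refine sum_congr rfl fun A hA => ?_
  rw [sum_const, card_compl, mem_powersetCard_univ.mp hA]

end Counting

theorem submodular_erase_erase_le {U M : Type*} [DecidableEq U] [Add M] [LE M] {g : Finset U → M}
    (hsub : ∀ A B, g (A ∪ B) + g (A ∩ B) ≤ g A + g B)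
    {S : Finset U} {x y : U} (hy : y ∈ S.erase x) :
    g S + g ((S.erase x).erase y) ≤ g (S.erase x) + g (S.erase y) := by
  have hunion : S.erase x ∪ S.erase y = S := by grind
  have hinter : S.erase x ∩ S.erase y = (S.erase x).erase y := by grind
  simpa only [hunion, hinter] using hsub (S.erase x) (S.erase y)

section Submodular

variable {U M : Type*} [DecidableEq U] [AddCommMonoid M] [PartialOrder M] [IsOrderedAddMonoid M]
  {g : Finset U → M}

theorem submodular_eraseSum_le (hsub : ∀ A B, g (A ∪ B) + g (A ∩ B) ≤ g A + g B)
    (S : Finset U) :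
    (#S * (#S - 1)) • g S + eraseSum (eraseSum g) S ≤ (2 * (#S - 1)) • eraseSum g S := by
  have hpairs := sum_le_sum fun x (_ : x ∈ S) => sum_le_sum fun y (hy : y ∈ S.erase x) =>
    submodular_erase_erase_le hsub hy
  simp only [sum_add_distrib, sum_sum_erase_eq_card_sub_one_nsmul_left,
    sum_sum_erase_eq_card_sub_one_nsmul_right S fun y => g (S.erase y)] at hpairs
  rw [sum_const] at hpairs
  convert hpairs using 1
  · rw [mul_nsmul]
    rfl
  · rw [two_mul, add_nsmul, eraseSum]

theorem submodular_sum_powersetCard_le [Fintype U]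
    (hsub : ∀ A B, g (A ∪ B) + g (A ∩ B) ≤ g A + g B) (k : ℕ) :
    ((k + 2) * (k + 1)) • ∑ S ∈ univ.powersetCard (k + 2), g S +
        ((Fintype.card U - k) * (Fintype.card U - (k + 1))) • ∑ S ∈ univ.powersetCard k, g S ≤
      (2 * (k + 1) * (Fintype.card U - (k + 1))) • ∑ S ∈ univ.powersetCard (k + 1), g S := by
  have hlevel : ∀ S ∈ (univ : Finset U).powersetCard (k + 2),
      ((k + 2) * (k + 1)) • g S + eraseSum (eraseSum g) S ≤ (2 * (k + 1)) • eraseSum g S :=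
    fun S hS => by simpa [mem_powersetCard_univ.mp hS] using submodular_eraseSum_le hsub S
  have hsum := sum_le_sum hlevel
  rw [sum_add_distrib, ← smul_sum, ← smul_sum, sum_powersetCard_succ_eraseSum (k + 1),
    sum_powersetCard_succ_eraseSum, sum_powersetCard_succ_eraseSum] at hsum
  rwa [← mul_nsmul, ← mul_nsmul, mul_comm _ (2 * (k + 1))] at hsum

end Submodular

theorem div_choose_concave_of_le {n k : ℕ} (hk : k + 2 ≤ n) {L : ℕ → ℝ}
    (h : (((k + 2) * (k + 1) : ℕ) : ℝ) * L (k + 2) + (((n - k) * (n - (k + 1)) : ℕ) : ℝ) * L k ≤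
      ((2 * (k + 1) * (n - (k + 1)) : ℕ) : ℝ) * L (k + 1)) :
    1 / (n.choose (k + 2) : ℝ) * L (k + 2) + 1 / (n.choose k : ℝ) * L k ≤
      2 * (1 / (n.choose (k + 1) : ℝ) * L (k + 1)) := by
  set D : ℕ := (k + 1) * (n - (k + 1)) * n.choose (k + 1)
  have hD2 : (k + 2) * (k + 1) * n.choose (k + 2) = D := by
    linear_combination (k + 1) * Nat.choose_succ_right_eq n (k + 1)
  have hD0 : (n - k) * (n - (k + 1)) * n.choose k = D := by
    linear_combination (n - (k + 1)) * (Nat.choose_succ_right_eq n k).symm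
  have hD1 : 2 * (k + 1) * (n - (k + 1)) * n.choose (k + 1) = 2 * D := by ring
  have hDpos : (0 : ℝ) < D := by
    have : 0 < n - (k + 1) := by omega
    have := Nat.choose_pos (show k + 1 ≤ n by omega)
    positivity
  have hcancel : ∀ {a c : ℕ} (x : ℝ), c ≠ 0 → ((a * c : ℕ) : ℝ) * (1 / c * x) = a * x := by
    intro a c x hc
    push_cast
    field_simp
  have hchoose : ∀ j ≤ n, n.choose j ≠ 0 := fun j hj => (Nat.choose_pos hj).ne'
  refine le_of_mul_le_mul_left ?_ hDpos
  calc (D : ℝ) * (1 / (n.choose (k + 2) : ℝ) * L (k + 2) + 1 / (n.choose k : ℝ) * L k)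
      = (((k + 2) * (k + 1) * n.choose (k + 2) : ℕ) : ℝ) * (1 / (n.choose (k + 2) : ℝ) * L (k + 2))
        + (((n - k) * (n - (k + 1)) * n.choose k : ℕ) : ℝ) * (1 / (n.choose k : ℝ) * L k) := by
        rw [hD2, hD0, mul_add]
    _ = (((k + 2) * (k + 1) : ℕ) : ℝ) * L (k + 2) + (((n - k) * (n - (k + 1)) : ℕ) : ℝ) * L k := by
        rw [hcancel _ (hchoose _ hk), hcancel _ (hchoose _ (by omega))]
    _ ≤ ((2 * (k + 1) * (n - (k + 1)) : ℕ) : ℝ) * L (k + 1) := h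
    _ = ((2 * (k + 1) * (n - (k + 1)) * n.choose (k + 1) : ℕ) : ℝ) *
          (1 / (n.choose (k + 1) : ℝ) * L (k + 1)) := by
        rw [hcancel _ (hchoose _ (by omega))]
    _ = D * (2 * (1 / (n.choose (k + 1) : ℝ) * L (k + 1))) := by
        rw [hD1]
        push_cast
        ring

/-- For a submodular `g` on a ground set of size `n`, the averages
`g_i` of `g` over all `i`-element subsets satisfy
`g_i + g_{i−2} ≤ 2 g_{i−1}` for `2 ≤ i ≤ n`. -/
theorem avg_submodular_concave
    {U : Type*} [Fintype U] [DecidableEq U]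
    (g : Finset U → ℝ)
    (hsub : ∀ A B : Finset U, g (A ∪ B) + g (A ∩ B) ≤ g A + g B)
    (n : ℕ) (hcard : Fintype.card U = n)
    (gavg : ℕ → ℝ)
    (hgavg : ∀ i : ℕ, gavg i =
      (1 / (n.choose i : ℝ)) * ∑ T ∈ (Finset.univ : Finset U).powersetCard i, g T)
    (i : ℕ) (h2 : 2 ≤ i) (hin : i ≤ n) :
    gavg i + gavg (i - 2) ≤ 2 * gavg (i - 1) := by
  obtain ⟨k, rfl⟩ : ∃ k, i = k + 2 := ⟨i - 2, by omega⟩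
  subst hcard
  have hlevel := submodular_sum_powersetCard_le hsub k
  simp only [nsmul_eq_mul] at hlevel
  rw [show k + 2 - 2 = k by omega, show k + 2 - 1 = k + 1 by omega, hgavg, hgavg, hgavg]
  exact div_choose_concave_of_le (L := fun j => ∑ T ∈ (univ : Finset U).powersetCard j, g T)
    hin hlevel
end

section
/- Let P, Q > 0 be real numbers with P² − 4Q < 0, and let a : ℕ → ℝ be a sequence satisfying a_{n+2} = P · a_{n+1} − Q · a_n for all n ≥ 1, where a_1 and a_2 are real and not both zero. Then there exists n ≥ 1 such that a_n < 0. -/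
/-!
Suppose every term is nonnegative. A zero term forces its predecessor to vanish as well, so
two consecutive zeros would propagate back to `a 1 = a 2 = 0`; hence all terms are positive.
The ratios `r n = a (n + 1) / a n` then obey `r (n + 1) = P - Q / r n` with `0 < r n ≤ P`, and
`r - (P - Q / r) = ((r - P / 2) ^ 2 + Q - P ^ 2 / 4) / r ≥ (4 * Q - P ^ 2) / (4 * P)`.
So the ratios drop by a fixed positive amount at every step and eventually become negative.
-/

lemma exists_lt_of_forall_succ_le_sub {r : ℕ → ℝ} {ε : ℝ} (hε : 0 < ε)
    (h : ∀ k, r (k + 1) ≤ r k - ε) (c : ℝ) : ∃ k, r k < c := by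
  have hle : ∀ k : ℕ, r k ≤ r 0 - k * ε := by
    intro k
    induction k with
    | zero => simp
    | succ k ih => push_cast; linarith [h k]
  obtain ⟨k, hk⟩ := exists_nat_gt ((r 0 - c) / ε)
  refine ⟨k, (hle k).trans_lt ?_⟩
  linarith [(div_lt_iff₀ hε).mp hk]

lemma div_sub_le_div_of_le_mul {P Q x y : ℝ} (hP : 0 < P) (hD : 0 ≤ 4 * Q - P ^ 2)
    (hx : 0 < x) (hy : 0 < y) (hyx : y ≤ P * x) :
    (P * y - Q * x) / y ≤ y / x - (4 * Q - P ^ 2) / (4 * P) := by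
  have hgap : (4 * Q - P ^ 2) / (4 * P) * y ≤ (4 * Q - P ^ 2) / 4 * x := by
    calc (4 * Q - P ^ 2) / (4 * P) * y ≤ (4 * Q - P ^ 2) / (4 * P) * (P * x) := by gcongr
      _ = (4 * Q - P ^ 2) / 4 * x := by field_simp
  rw [div_sub' hx.ne', div_le_div_iff₀ hy hx]
  nlinarith [sq_nonneg (y - P / 2 * x)]

section Recurrence

variable {P Q : ℝ} {u : ℕ → ℝ} (hrec : ∀ n, u (n + 2) = P * u (n + 1) - Q * u n)
include hrec

lemma recurrence_succ_succ_le (hQ : 0 ≤ Q) (hu : ∀ n, 0 ≤ u n) (n : ℕ) :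
    u (n + 2) ≤ P * u (n + 1) := by
  nlinarith [hrec n, hu n]

lemma recurrence_initial_eq_zero (hQ : Q ≠ 0) {n : ℕ} (h₀ : u n = 0) (h₁ : u (n + 1) = 0) :
    u 0 = 0 ∧ u 1 = 0 := by
  induction n with
  | zero => exact ⟨h₀, h₁⟩
  | succ n ih =>
    refine ih ?_ h₀
    have := hrec n
    rw [h₀, h₁] at this
    simpa [hQ] using this

lemma recurrence_pos (hQ : 0 < Q) (hu : ∀ n, 0 ≤ u n) (h01 : ¬(u 0 = 0 ∧ u 1 = 0)) (n : ℕ) :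
    0 < u (n + 1) := by
  refine (hu (n + 1)).lt_of_ne' fun hzero => h01 ?_
  have hQu : Q * u n ≤ 0 := by
    have := hrec n
    rw [hzero, mul_zero] at this
    linarith [hu (n + 2)]
  have hprev : u n = 0 := le_antisymm (nonpos_of_mul_nonpos_right hQu hQ) (hu n)
  exact recurrence_initial_eq_zero hrec hQ.ne' hprev hzero

lemma recurrence_ratio_succ_le (hP : 0 < P) (hQ : 0 ≤ Q) (hD : 0 ≤ 4 * Q - P ^ 2)
    (hu : ∀ n, 0 ≤ u n) (hpos : ∀ n, 0 < u (n + 1)) (k : ℕ) :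
    u (k + 3) / u (k + 2) ≤ u (k + 2) / u (k + 1) - (4 * Q - P ^ 2) / (4 * P) := by
  rw [hrec (k + 1)]
  exact div_sub_le_div_of_le_mul hP hD (hpos k) (hpos (k + 1))
    (recurrence_succ_succ_le hrec hQ hu k)

end Recurrence

/-- For a second-order linear recurrence `a_{n+2} = P·a_{n+1} − Q·a_n` with
`P, Q > 0` and negative discriminant `P² − 4Q < 0`, whose initial values `a_1, a_2`
are not both zero, some term of the sequence is negative. -/
theorem exists_neg_of_complex_root_recurrence
    (P Q : ℝ) (hP : 0 < P) (hQ : 0 < Q) (hD : P ^ 2 - 4 * Q < 0)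
    (a : ℕ → ℝ)
    (hrec : ∀ n : ℕ, 1 ≤ n → a (n + 2) = P * a (n + 1) - Q * a n)
    (hnz : ¬(a 1 = 0 ∧ a 2 = 0)) :
    ∃ n : ℕ, 1 ≤ n ∧ a n < 0 := by
  by_contra! hnonneg
  set u : ℕ → ℝ := fun n => a (n + 1)
  have hu_rec : ∀ n, u (n + 2) = P * u (n + 1) - Q * u n := fun n => hrec (n + 1) n.succ_pos
  have hu : ∀ n, 0 ≤ u n := fun n => hnonneg (n + 1) n.succ_pos
  have hpos : ∀ n, 0 < u (n + 1) := recurrence_pos hu_rec hQ hu hnz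
  obtain ⟨k, hk⟩ := exists_lt_of_forall_succ_le_sub (r := fun k => u (k + 2) / u (k + 1))
    (div_pos (by linarith) (by positivity))
    (recurrence_ratio_succ_le hu_rec hP hQ.le (by linarith) hu hpos) 0
  exact hk.not_ge (div_pos (hpos (k + 1)) (hpos k)).le
end

section
/- Let c > 1 be a real number, let u_1, …, u_n be distinct elements of a set Ω, and let w : Ω → ℝ satisfy w(u_i) ≥ 0 for all i. Let S_0 = ∅ and suppose that for each i ∈ {1,…,n}, either S_i = S_{i−1} ∪ {u_i}, or S_i = (S_{i−1} \ {u'_i}) ∪ {u_i} for some u'_i ∈ S_{i−1} with w(u_i) ≥ c · w(u'_i). Then ∑_{i=1}^{n} w(u_i) ≤ (c/(c−1)) · ∑_{u ∈ S_n} w(u). -/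
open Finset

/-! Each acceptance raises the weight of the current set by at least `(1 - 1/c) · w(u_i)`: by
`w(u_i)` when `u_i` is simply added, and by `w(u_i) - w(u'_i) ≥ (1 - 1/c) · w(u_i)` when it
replaces `u'_i`. Injectivity of `u` guarantees that `u_i` is not already in `S_{i-1}`, since that
set only contains earlier elements. Summing over `i` gives the bound. -/

theorem le_div_sub_one_mul_sub {a b c : ℝ} (hc : 1 < c) (h : c * a ≤ b) :
    b ≤ c / (c - 1) * (b - a) := by
  rw [div_mul_eq_mul_div, le_div_iff₀ (sub_pos.2 hc)]
  linarith

section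

variable {Ω : Type*} [DecidableEq Ω]

def IsAcceptStep (c : ℝ) (w : Ω → ℝ) (x : Ω) (T T' : Finset Ω) : Prop :=
  T' = insert x T ∨ ∃ y ∈ T, T' = insert x (T.erase y) ∧ c * w y ≤ w x

variable {c : ℝ} {w : Ω → ℝ} {x : Ω} {T T' : Finset Ω}

theorem IsAcceptStep.subset_insert (h : IsAcceptStep c w x T T') : T' ⊆ insert x T := by
  rcases h with rfl | ⟨y, -, rfl, -⟩
  · exact Subset.rfl
  · exact insert_subset_insert x (erase_subset y T)

theorem IsAcceptStep.le_mul_sum_sub (hc : 1 < c) (h : IsAcceptStep c w x T T') (hx : x ∉ T)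
    (hwx : 0 ≤ w x) : w x ≤ c / (c - 1) * (∑ y ∈ T', w y - ∑ y ∈ T, w y) := by
  rcases h with rfl | ⟨y, hy, rfl, hcy⟩
  · rw [sum_insert hx, add_sub_cancel_right]
    simpa using le_div_sub_one_mul_sub hc (a := 0) (by simpa using hwx)
  · rw [sum_insert fun h ↦ hx (mem_of_mem_erase h), sum_erase_eq_sub hy]
    convert le_div_sub_one_mul_sub hc hcy using 2
    ring

theorem subset_range_and_sum_le_of_isAcceptStep (hc : 1 < c) :
    ∀ (n : ℕ) (u : Fin n → Ω), Function.Injective u → (∀ i, 0 ≤ w (u i)) →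
      ∀ S : ℕ → Finset Ω, S 0 = ∅ → (∀ i : Fin n, IsAcceptStep c w (u i) (S i) (S (i + 1))) →
        (S n : Set Ω) ⊆ Set.range u ∧ ∑ i, w (u i) ≤ c / (c - 1) * ∑ x ∈ S n, w x
  | 0, _, _, _, S, hS0, _ => by simp [hS0]
  | n + 1, u, hu, hw, S, hS0, hstep => by
    obtain ⟨hrange, hsum⟩ := subset_range_and_sum_le_of_isAcceptStep hc n (u ∘ Fin.castSucc)
      (hu.comp (Fin.castSucc_injective n)) (fun i ↦ hw _) S hS0 (fun i ↦ hstep i.castSucc)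
    have hlast := hstep (Fin.last n)
    have hnotin : u (Fin.last n) ∉ S n := by
      intro hmem
      obtain ⟨j, hj⟩ := hrange hmem
      exact Fin.castSucc_ne_last j (hu hj)
    refine ⟨fun y hy ↦ ?_, ?_⟩
    · rcases mem_insert.1 (hlast.subset_insert hy) with rfl | hy
      · exact ⟨_, rfl⟩
      · obtain ⟨j, rfl⟩ := hrange hy
        exact ⟨_, rfl⟩
    · have := hlast.le_mul_sum_sub hc hnotin (hw _)
      rw [Fin.sum_univ_castSucc]
      simp only [Function.comp_apply, Fin.val_last] at hsum this ⊢
      linarith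

end

/-- If in each round the algorithm either adds the new element `u_i` or replaces
an element `u'_i` of the current set with `u_i` such that `w(u_i) ≥ c · w(u'_i)`,
then the total weight of all accepted elements is at most `c/(c−1)` times the
weight of the final set. -/
theorem total_accepted_weight_le (c : ℝ) (hc : 1 < c)
    {Ω : Type*} [DecidableEq Ω]
    (n : ℕ) (u : Fin n → Ω) (hu : Function.Injective u)
    (w : Ω → ℝ) (hw : ∀ i : Fin n, 0 ≤ w (u i))
    (S : ℕ → Finset Ω) (hS0 : S 0 = ∅)
    (hstep : ∀ i : Fin n,
      S ((i : ℕ) + 1) = insert (u i) (S (i : ℕ)) ∨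
        ∃ u' ∈ S (i : ℕ), S ((i : ℕ) + 1) = insert (u i) ((S (i : ℕ)).erase u') ∧
          c * w u' ≤ w (u i)) :
    ∑ i : Fin n, w (u i) ≤ (c / (c - 1)) * ∑ x ∈ S n, w x :=
  (subset_range_and_sum_le_of_isAcceptStep hc n u hu hw S hS0 hstep).2
end

section
/- Let Ω be a finite set, let f : Finset Ω → ℝ be submodular, and let u_1, …, u_n be distinct elements of Ω. For 0 ≤ i ≤ n let A_i := {u_1, …, u_i}. Then for every subset S ⊆ A_n, ∑_{i : u_i ∈ S} (f(A_i) − f(A_{i−1})) ≤ f(S) − f(∅). -/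
open Finset

/-- For submodular `f` and distinct elements `u_1, …, u_n` with prefixes
`A_i = {u_1, …, u_i}`, for every `S ⊆ A_n` the sum of the marginal values
`f(A_i) − f(A_{i−1})` over the indices `i` with `u_i ∈ S` is at most `f(S) − f(∅)`. -/
theorem sum_arrival_marginals_le {Ω : Type*} [Fintype Ω] [DecidableEq Ω]
    (f : Finset Ω → ℝ)
    (hsub : ∀ A B : Finset Ω, f (A ∪ B) + f (A ∩ B) ≤ f A + f B)
    (n : ℕ) (u : Fin n → Ω) (hu : Function.Injective u)
    (A : ℕ → Finset Ω)
    (hA : ∀ i : ℕ, A i = (Finset.univ.filter (fun j : Fin n => (j : ℕ) < i)).image u)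
    (S : Finset Ω) (hS : S ⊆ A n) :
    ∑ j ∈ Finset.univ.filter (fun j : Fin n => u j ∈ S),
        (f (A ((j : ℕ) + 1)) - f (A (j : ℕ))) ≤ f S - f ∅ := by
  -- key: A (i+1) = insert (u ⟨i,hi⟩) (A i) for i < n
  have hAins : ∀ i (hi : i < n), A (i + 1) = insert (u ⟨i, hi⟩) (A i) := by
    intro i hi
    rw [hA, hA]
    ext x
    simp only [mem_image, mem_filter, mem_univ, true_and, mem_insert]
    constructor
    · rintro ⟨j, hj, rfl⟩
      rcases Nat.lt_succ_iff_lt_or_eq.mp hj with h | h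
      · exact Or.inr ⟨j, h, rfl⟩
      · left; congr 1; exact Fin.ext h
    · rintro (rfl | ⟨j, hj, rfl⟩)
      · exact ⟨⟨i, hi⟩, Nat.lt_succ_self i, rfl⟩
      · exact ⟨j, Nat.lt_succ_of_lt hj, rfl⟩
  have hnotmem : ∀ i (hi : i < n), u ⟨i, hi⟩ ∉ A i := by
    intro i hi h
    rw [hA] at h
    obtain ⟨j, hj, hje⟩ := mem_image.mp h
    have := hu hje
    rw [this] at hj
    simp at hj
  have key : ∀ i ≤ n,
      ∑ j ∈ Finset.univ.filter (fun j : Fin n => (j : ℕ) < i ∧ u j ∈ S),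
        (f (A ((j : ℕ) + 1)) - f (A (j : ℕ))) ≤ f (S ∩ A i) - f ∅ := by
    intro i
    induction i with
    | zero =>
      intro _
      have h0 : A 0 = ∅ := by rw [hA]; simp
      simp [h0]
    | succ i ih =>
      intro hin
      have hi : i < n := hin
      have ihh := ih (le_of_lt hi)
      set x := u ⟨i, hi⟩ with hx
      by_cases hxS : x ∈ S
      · -- split off index i
        have hfilter : Finset.univ.filter (fun j : Fin n => (j : ℕ) < i + 1 ∧ u j ∈ S)
            = insert ⟨i, hi⟩ (Finset.univ.filter (fun j : Fin n => (j : ℕ) < i ∧ u j ∈ S)) := by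
          ext j
          simp only [mem_filter, mem_univ, true_and, mem_insert]
          constructor
          · rintro ⟨hj, hjS⟩
            rcases Nat.lt_succ_iff_lt_or_eq.mp hj with h | h
            · exact Or.inr ⟨h, hjS⟩
            · left; exact Fin.ext h
          · rintro (rfl | ⟨hj, hjS⟩)
            · exact ⟨Nat.lt_succ_self i, hxS⟩
            · exact ⟨Nat.lt_succ_of_lt hj, hjS⟩
        have hnot : (⟨i, hi⟩ : Fin n) ∉
            Finset.univ.filter (fun j : Fin n => (j : ℕ) < i ∧ u j ∈ S) := by
          simp
        rw [hfilter, Finset.sum_insert hnot]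
        -- submodularity step
        have hsub' := hsub (A i) (S ∩ A (i + 1))
        have hunion : A i ∪ (S ∩ A (i + 1)) = A (i + 1) := by
          rw [hAins i hi]
          apply Finset.Subset.antisymm
          · apply Finset.union_subset
            · exact Finset.subset_insert _ _
            · exact Finset.inter_subset_right
          · intro y hy
            rcases Finset.mem_insert.mp hy with rfl | hy
            · exact Finset.mem_union_right _ (Finset.mem_inter.mpr ⟨hxS, Finset.mem_insert_self _ _⟩)
            · exact Finset.mem_union_left _ hy
        have hinter : A i ∩ (S ∩ A (i + 1)) = S ∩ A i := by
          rw [hAins i hi]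
          ext y
          simp only [Finset.mem_inter, Finset.mem_insert]
          constructor
          · rintro ⟨h1, h2, _⟩; exact ⟨h2, h1⟩
          · rintro ⟨h1, h2⟩; exact ⟨h2, h1, Or.inr h2⟩
        rw [hunion, hinter] at hsub'
        have step : f (A (i + 1)) - f (A i) ≤ f (S ∩ A (i + 1)) - f (S ∩ A i) := by
          linarith
        calc (f (A (i + 1)) - f (A i)) +
              ∑ j ∈ Finset.univ.filter (fun j : Fin n => (j : ℕ) < i ∧ u j ∈ S),
                (f (A ((j : ℕ) + 1)) - f (A (j : ℕ)))
            ≤ (f (S ∩ A (i + 1)) - f (S ∩ A i)) + (f (S ∩ A i) - f ∅) := by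
              exact add_le_add step ihh
          _ = f (S ∩ A (i + 1)) - f ∅ := by ring
      · -- same filter set, same intersection
        have hfilter : Finset.univ.filter (fun j : Fin n => (j : ℕ) < i + 1 ∧ u j ∈ S)
            = Finset.univ.filter (fun j : Fin n => (j : ℕ) < i ∧ u j ∈ S) := by
          ext j
          simp only [mem_filter, mem_univ, true_and]
          constructor
          · rintro ⟨hj, hjS⟩
            rcases Nat.lt_succ_iff_lt_or_eq.mp hj with h | h
            · exact ⟨h, hjS⟩
            · have hji : j = ⟨i, hi⟩ := Fin.ext h
              subst hji
              exact absurd hjS hxS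
          · rintro ⟨hj, hjS⟩
            exact ⟨Nat.lt_succ_of_lt hj, hjS⟩
        have hinter : S ∩ A (i + 1) = S ∩ A i := by
          rw [hAins i hi]
          ext y
          simp only [Finset.mem_inter, Finset.mem_insert]
          constructor
          · rintro ⟨h1, rfl | h2⟩
            · exact absurd h1 hxS
            · exact ⟨h1, h2⟩
          · rintro ⟨h1, h2⟩; exact ⟨h1, Or.inr h2⟩
        rw [hfilter, hinter]
        exact ihh
  have hfin := key n le_rfl
  have hSA : S ∩ A n = S := Finset.inter_eq_left.mpr hS
  rw [hSA] at hfin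
  have : Finset.univ.filter (fun j : Fin n => (j : ℕ) < n ∧ u j ∈ S)
      = Finset.univ.filter (fun j : Fin n => u j ∈ S) := by
    ext j; simp [j.isLt]
  rw [this] at hfin
  exact hfin
end

section
/- Let Ω be a finite set and f : Finset Ω → ℝ monotone and submodular. Let S ⊆ Ω be finite, u' ∈ S, u ∉ S, and let A, B ⊆ Ω be finite sets with S \ {u'} ⊆ A, u ∉ A, B ⊆ S \ {u'}, and u' ∉ B. If f(A ∪ {u}) − f(A) > f(B ∪ {u'}) − f(B), then f((S \ {u'}) ∪ {u}) > f(S). -/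
open Finset

/-- One-step monotonicity: if the marginal value of the new element `u` with
respect to `A` (a superset of `S \ {u'}` not containing `u`) strictly exceeds the
marginal value of `u'` with respect to `B ⊆ S \ {u'}`, then replacing `u'` by `u`
strictly increases the objective. -/
theorem replace_strictly_increases {Ω : Type*} [Fintype Ω] [DecidableEq Ω]
    (f : Finset Ω → ℝ)
    (hmono : ∀ A B : Finset Ω, A ⊆ B → f A ≤ f B)
    (hsub : ∀ A B : Finset Ω, f (A ∪ B) + f (A ∩ B) ≤ f A + f B)
    (S A B : Finset Ω) (u' u : Ω)
    (hu'S : u' ∈ S) (huS : u ∉ S)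
    (hSA : S.erase u' ⊆ A) (huA : u ∉ A)
    (hBS : B ⊆ S.erase u') (hu'B : u' ∉ B)
    (h : f (insert u A) - f A > f (insert u' B) - f B) :
    f (insert u (S.erase u')) > f S := by
  set T := S.erase u' with hT
  have h1 : f (insert u A) + f T ≤ f (insert u T) + f A := by
    have := hsub (insert u T) A
    have hU : insert u T ∪ A = insert u A := by
      ext x; simp only [mem_union, mem_insert]; tauto
    have hI : insert u T ∩ A = T := by
      ext x
      simp only [mem_inter, mem_insert]
      constructor
      · rintro ⟨h1 | h1, h2⟩
        · exact absurd (h1 ▸ h2) huA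
        · exact h1
      · intro hx; exact ⟨Or.inr hx, hSA hx⟩
    rw [hU, hI] at this; linarith
  have h2 : f S + f B ≤ f (insert u' B) + f T := by
    have := hsub (insert u' B) T
    have hU : insert u' B ∪ T = S := by
      ext x
      simp only [mem_union, mem_insert, hT, mem_erase]
      constructor
      · rintro ((h1 | h1) | ⟨_, h1⟩)
        · exact h1 ▸ hu'S
        · exact (mem_erase.mp (hBS h1)).2
        · exact h1
      · intro hx
        by_cases hx' : x = u'
        · exact Or.inl (Or.inl hx')
        · exact Or.inr ⟨hx', hx⟩
    have hI : insert u' B ∩ T = B := by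
      ext x
      simp only [mem_inter, mem_insert, hT, mem_erase]
      constructor
      · rintro ⟨h1 | h1, h2, _⟩
        · exact absurd h1 h2
        · exact h1
      · intro hx
        have := mem_erase.mp (hBS hx)
        exact ⟨Or.inr hx, this.1, this.2⟩
    rw [hU, hI] at this; linarith
  linarith
end

section
/- Let α ≥ 1 and ε, δ ∈ (0,1). Define the sequence (β_m)_{m ≥ 1} by β_1 := (α − 1)/(1 − δ) and β_{m+1} := (α − 1 − α·(1−ε)^{1 + β_m/ε})/(1 − δ). Then the sequence is strictly decreasing: β_{m+1} < β_m for every m ≥ 1. -/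
/-- The sequence `β_1 = (α−1)/(1−δ)`,
`β_{m+1} = (α − 1 − α(1−ε)^{1+β_m/ε})/(1−δ)` is strictly decreasing. -/
theorem beta_strictly_decreasing
    (α ε δ : ℝ) (hα : 1 ≤ α) (hε : ε ∈ Set.Ioo (0 : ℝ) 1) (hδ : δ ∈ Set.Ioo (0 : ℝ) 1)
    (β : ℕ → ℝ)
    (hβ1 : β 1 = (α - 1) / (1 - δ))
    (hβ : ∀ m : ℕ, 1 ≤ m →
      β (m + 1) = (α - 1 - α * (1 - ε) ^ (1 + β m / ε)) / (1 - δ)) :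
    ∀ m : ℕ, 1 ≤ m → β (m + 1) < β m := by
  obtain ⟨hε0, hε1⟩ := hε
  obtain ⟨hδ0, hδ1⟩ := hδ
  have hδ' : (0 : ℝ) < 1 - δ := by linarith
  have hb : (0 : ℝ) < 1 - ε := by linarith
  have hα0 : (0 : ℝ) < α := by linarith
  intro m hm
  induction m with
  | zero => omega
  | succ n ih =>
    rcases Nat.lt_or_ge 1 (n + 1) with h | h
    · -- n ≥ 1
      have hn : 1 ≤ n := by omega
      have hlt := ih hn
      have hexp : 1 + β (n + 1) / ε < 1 + β n / ε := by
        have := div_lt_div_of_pos_right hlt hε0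
        linarith
      have hkey := Real.rpow_lt_rpow_of_exponent_gt hb (by linarith : 1 - ε < 1) hexp
      calc β (n + 1 + 1) = (α - 1 - α * (1 - ε) ^ (1 + β (n + 1) / ε)) / (1 - δ) :=
            hβ (n + 1) (by omega)
        _ < (α - 1 - α * (1 - ε) ^ (1 + β n / ε)) / (1 - δ) := by
            rw [div_lt_div_iff_of_pos_right hδ']
            nlinarith
        _ = β (n + 1) := (hβ n hn).symm
    · -- n = 0
      have hn : n = 0 := by omega
      subst hn
      have hpos := Real.rpow_pos_of_pos hb (1 + β 1 / ε)
      calc β (0 + 1 + 1) = (α - 1 - α * (1 - ε) ^ (1 + β 1 / ε)) / (1 - δ) := hβ 1 le_rfl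
        _ < (α - 1) / (1 - δ) := by
            rw [div_lt_div_iff_of_pos_right hδ']
            nlinarith
        _ = β (0 + 1) := hβ1.symm
end

section
/- Let α ≥ 1 and ε, δ ∈ (0,1), and set c := −ε / log(1−ε). Suppose β ∈ ℝ satisfies β·(1−δ) = α − 1 − α·(1−ε)^{1 + β/ε}. Then α − 1 ≥ (1−δ) · ( c · log( α / (c·(1−δ)) ) + c − ε ). -/
/-- If `β` satisfies the fixed-point equation
`β(1−δ) = α − 1 − α(1−ε)^{1+β/ε}`, then
`α − 1 ≥ (1−δ)(c·log(α/(c(1−δ))) + c − ε)` where `c = −ε/log(1−ε)`. -/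
theorem alpha_lower_bound_from_fixed_point
    (α ε δ : ℝ) (hα : 1 ≤ α) (hε : ε ∈ Set.Ioo (0 : ℝ) 1) (hδ : δ ∈ Set.Ioo (0 : ℝ) 1)
    (c : ℝ) (hc : c = -ε / Real.log (1 - ε))
    (β : ℝ)
    (hβ : β * (1 - δ) = α - 1 - α * (1 - ε) ^ (1 + β / ε)) :
    α - 1 ≥ (1 - δ) * (c * Real.log (α / (c * (1 - δ))) + c - ε) := by
  obtain ⟨hε0, hε1⟩ := hε
  obtain ⟨hδ0, hδ1⟩ := hδ
  set L := Real.log (1 - ε) with hLdef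
  have hL : L < 0 := Real.log_neg (by linarith) (by linarith)
  have hLne : L ≠ 0 := ne_of_lt hL
  have hcL : c * L = -ε := by rw [hc]; field_simp
  have hcpos : 0 < c := by
    rw [hc]; apply div_pos_of_neg_of_neg <;> linarith
  have hαpos : (0:ℝ) < α := by linarith
  have hMpos : 0 < c * (1 - δ) / α := div_pos (mul_pos hcpos (by linarith)) hαpos
  set s := Real.log (α / (c * (1 - δ))) with hsdef
  have hexpM : Real.exp (-s) = c * (1 - δ) / α := by
    have : -s = Real.log (c * (1 - δ) / α) := by
      rw [hsdef, ← Real.log_inv]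
      congr 1
      field_simp
    rw [this, Real.exp_log hMpos]
  set x := (1 + β / ε) * L with hxdef
  have hrpow : (1 - ε) ^ (1 + β / ε) = Real.exp x := by
    rw [Real.rpow_def_of_pos (by linarith), hxdef, mul_comm]
  have hkey : Real.exp x ≥ (c * (1 - δ) / α) * (x + s + 1) := by
    have h1 : x + s + 1 ≤ Real.exp (x + s) := Real.add_one_le_exp (x + s)
    have h2 : Real.exp x = Real.exp (-s) * Real.exp (x + s) := by
      rw [← Real.exp_add]; ring_nf
    rw [h2, hexpM]
    exact mul_le_mul_of_nonneg_left h1 (le_of_lt hMpos)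
  have hcx : c * x = -ε - β := by
    rw [hxdef]
    have : c * ((1 + β / ε) * L) = (1 + β / ε) * (c * L) := by ring
    rw [this, hcL]
    field_simp
    ring
  have hαe : α * Real.exp x ≥ (1 - δ) * (c * x + c * s + c) := by
    have := mul_le_mul_of_nonneg_left hkey.le (le_of_lt hαpos)
    -- this : α * ((c*(1-δ)/α) * (x+s+1)) ≤ α * exp x ... careful direction
    have h3 : α * ((c * (1 - δ) / α) * (x + s + 1)) = (1 - δ) * (c * x + c * s + c) := by
      field_simp
    nlinarith [mul_le_mul_of_nonneg_left hkey (le_of_lt hαpos)]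
  rw [hrpow] at hβ
  have h1δ : (0:ℝ) < 1 - δ := by linarith
  nlinarith [hαe, hcx]
end

section
/- Let ρ ≥ 1 be an integer and let k, k' be integers with 1 ≤ k ≤ k'. Suppose α ≥ ρ + 1 satisfies α = (1 + (α − ρ − 1)/(ρk + 1))^{ρk+1} and α' ≥ ρ + 1 satisfies α' = (1 + (α' − ρ − 1)/(ρk' + 1))^{ρk'+1}. Then α ≥ α'. -/
/-!
Write `t = α - ρ - 1`, `n = ρk + 1`, `m = ρk' + 1`. Since `(1 + t/n)^n` increases with `n`, the
root `α` of the equation for `k` satisfies `ρ + 1 + t ≤ (1 + t/m)^m`. The function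
`g s = (1 + s/m)^m - (ρ + 1 + s)` is convex with `g 0 = -ρ < 0`, so once it is nonnegative at `t`
it is positive beyond `t`; hence its zero `α' - ρ - 1` cannot exceed `t`.
-/

open Set

lemma ConvexOn.neg_of_mem_Ico {s : Set ℝ} {g : ℝ → ℝ} {a x y : ℝ} (hg : ConvexOn ℝ s g)
    (ha : a ∈ s) (hy : y ∈ s) (hga : g a < 0) (hgy : g y ≤ 0) (hx : x ∈ Ico a y) : g x < 0 := by
  rcases hx.1.eq_or_lt with rfl | hax
  · exact hga
  by_contra! hgx
  have hx' : x ∈ openSegment ℝ a y := by rw [openSegment_eq_Ioo (hax.trans hx.2)]; exact ⟨hax, hx.2⟩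
  exact (hg.lt_right_of_left_lt ha hy hx' (hga.trans_le hgx)).not_ge (hgy.trans hgx)

lemma one_add_div_nonneg {s : ℝ} {m : ℕ} (hs : -(m : ℝ) ≤ s) : 0 ≤ 1 + s / m := by
  rcases m.eq_zero_or_pos with rfl | hm
  · simp
  · rw [← neg_le_iff_add_nonneg', le_div_iff₀ (by exact_mod_cast hm)]; linarith

lemma one_add_div_pow_le_one_add_div_pow {t : ℝ} {n m : ℕ} (hn : 0 < n) (hnm : n ≤ m)
    (ht : -(n : ℝ) ≤ t) : (1 + t / n) ^ n ≤ (1 + t / m) ^ m := by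
  have hn' : (0 : ℝ) < n := by exact_mod_cast hn
  have hnm' : (n : ℝ) ≤ m := by exact_mod_cast hnm
  have htm : -(m : ℝ) ≤ t := by linarith
  have hbernoulli : 1 + t / n ≤ (1 + t / m) ^ ((m : ℝ) / n) := by
    have h := one_add_mul_self_le_rpow_one_add (s := t / m)
      (neg_le_iff_add_nonneg'.2 (one_add_div_nonneg htm)) ((one_le_div hn').2 hnm')
    rwa [show (m : ℝ) / n * (t / m) = t / n by field_simp [(hn'.trans_le hnm').ne']] at h
  calc (1 + t / n) ^ n ≤ ((1 + t / m) ^ ((m : ℝ) / n)) ^ n :=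
        pow_le_pow_left₀ (one_add_div_nonneg ht) hbernoulli n
    _ = (1 + t / m) ^ m := by
        rw [← Real.rpow_natCast _ n, ← Real.rpow_mul (one_add_div_nonneg htm),
          div_mul_cancel₀ _ hn'.ne', Real.rpow_natCast]

lemma convexOn_one_add_div_pow (m : ℕ) :
    ConvexOn ℝ (Ici (-(m : ℝ))) fun s : ℝ => (1 + s / m) ^ m := by
  set φ := AffineMap.lineMap (k := ℝ) (1 : ℝ) (1 + 1 / (m : ℝ))
  have hφ (s : ℝ) : φ s = 1 + s / m := by
    rw [AffineMap.lineMap_apply_ring']; ring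
  refine (((convexOn_pow m).comp_affineMap φ).subset (fun s hs => ?_) (convex_Ici _)).congr
    (fun s _ => ?_)
  · rw [mem_preimage, hφ]; exact one_add_div_nonneg hs
  · simp only [Function.comp_apply, hφ]

theorem alpha_k_antitone_general
    (ρ : ℕ) (hρ : 1 ≤ ρ) (k k' : ℕ) (hkk' : k ≤ k')
    (α α' : ℝ)
    (hα : (ρ : ℝ) + 1 ≤ α)
    (hαeq : α = (1 + (α - (ρ : ℝ) - 1) / ((ρ : ℝ) * (k : ℝ) + 1)) ^ (ρ * k + 1))
    (hα'eq : α' = (1 + (α' - (ρ : ℝ) - 1) / ((ρ : ℝ) * (k' : ℝ) + 1)) ^ (ρ * k' + 1)) :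
    α' ≤ α := by
  set n := ρ * k + 1
  set m := ρ * k' + 1
  have hnm : n ≤ m := Nat.add_le_add_right (Nat.mul_le_mul_left ρ hkk') 1
  set g : ℝ → ℝ := fun s => (1 + s / m) ^ m - (ρ + 1 + s)
  have hline : ConcaveOn ℝ (Ici (-(m : ℝ))) fun s : ℝ => ρ + 1 + s :=
    (concaveOn_const _ (convex_Ici _)).add (concaveOn_id (convex_Ici _))
  have hg : ConvexOn ℝ (Ici (-(m : ℝ))) g := (convexOn_one_add_div_pow m).sub hline
  have hg₀ : g 0 < 0 := by
    have : (1 : ℝ) ≤ ρ := by exact_mod_cast hρ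
    simp only [g, zero_div, add_zero, one_pow]
    linarith
  have hgα : 0 ≤ g (α - ρ - 1) := by
    have := one_add_div_pow_le_one_add_div_pow (t := α - ρ - 1) (by positivity) hnm
      (by linarith [n.cast_nonneg (α := ℝ)])
    push_cast [n] at this
    linarith
  have hgα' : g (α' - ρ - 1) = 0 := by
    push_cast [g, m]
    linarith
  by_contra! hαα'
  have hα'_mem : α' - ρ - 1 ∈ Ici (-(m : ℝ)) := by
    rw [mem_Ici]; linarith [m.cast_nonneg (α := ℝ)]
  have := hg.neg_of_mem_Ico (x := α - ρ - 1) (by simp) hα'_mem hg₀ hgα'.le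
    ⟨by linarith, by linarith⟩
  linarith

/-- `α_k` is non-increasing in `k`: if `α` and `α'` are the roots at least `ρ+1`
of the defining equations for parameters `k ≤ k'`, then `α ≥ α'`. -/
theorem alpha_k_antitone
    (ρ : ℕ) (hρ : 1 ≤ ρ) (k k' : ℕ) (hk : 1 ≤ k) (hkk' : k ≤ k')
    (α α' : ℝ)
    (hα : (ρ : ℝ) + 1 ≤ α)
    (hαeq : α = (1 + (α - (ρ : ℝ) - 1) / ((ρ : ℝ) * (k : ℝ) + 1)) ^ (ρ * k + 1))
    (hα' : (ρ : ℝ) + 1 ≤ α')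
    (hα'eq : α' = (1 + (α' - (ρ : ℝ) - 1) / ((ρ : ℝ) * (k' : ℝ) + 1)) ^ (ρ * k' + 1)) :
    α' ≤ α :=
  alpha_k_antitone_general ρ hρ k k' hkk' α α' hα hαeq hα'eq
end

section
/- Let α be a real number with 1 ≤ α < (3 + √5)/2, and let b : ℕ → ℝ be a sequence satisfying b_{n+1} = (α² − α + 1)·b_n − α²·b_{n−1} for all n ≥ 2, with b_1 and b_2 not both zero. Then there exists n ≥ 1 such that b_n < 0. -/
/-- For `1 ≤ α < (3+√5)/2`, any sequence satisfying
`b_{n+1} = (α²−α+1)·b_n − α²·b_{n−1}` for `n ≥ 2` with `b_1, b_2` not both zero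
has a negative term. -/
theorem exists_neg_term_hardness_recurrence
    (α : ℝ) (h1 : 1 ≤ α) (h2 : α < (3 + Real.sqrt 5) / 2)
    (b : ℕ → ℝ)
    (hrec : ∀ n : ℕ, 2 ≤ n → b (n + 1) = (α ^ 2 - α + 1) * b n - α ^ 2 * b (n - 1))
    (hnz : ¬(b 1 = 0 ∧ b 2 = 0)) :
    ∃ n : ℕ, 1 ≤ n ∧ b n < 0 := by
  by_contra hneg
  push_neg at hneg
  obtain ⟨p, hpdef⟩ : ∃ p : ℝ, α ^ 2 - α + 1 = p := ⟨_, rfl⟩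
  obtain ⟨q, hqdef⟩ : ∃ q : ℝ, α ^ 2 = q := ⟨_, rfl⟩
  simp only [hpdef] at hrec
  simp only [hqdef] at hrec
  have hα0 : (0:ℝ) < α := lt_of_lt_of_le one_pos h1
  have hq0 : 0 < q := by rw [← hqdef]; positivity
  have hp0 : 0 < p := by rw [← hpdef]; nlinarith [sq_nonneg (α - 1)]
  have hs2 : Real.sqrt 5 ^ 2 = 5 := Real.sq_sqrt (by norm_num)
  have hsgt : (2:ℝ) < Real.sqrt 5 := by
    nlinarith [Real.sqrt_nonneg 5, hs2]
  -- α² - 3α + 1 < 0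
  have hkey : α ^ 2 - 3 * α + 1 < 0 := by
    nlinarith [hs2, hsgt, h2, h1]
  have hdisc : p ^ 2 < 4 * q := by
    rw [← hpdef, ← hqdef]
    have hpos : 0 < α ^ 2 + α + 1 := by positivity
    nlinarith [mul_neg_of_neg_of_pos hkey hpos]
  obtain ⟨m, hmdef⟩ : ∃ m : ℝ, q - p ^ 2 / 4 = m := ⟨_, rfl⟩
  have hm : 0 < m := by rw [← hmdef]; linarith
  -- b 2 > 0
  have hb1 : 0 ≤ b 1 := hneg 1 le_rfl
  have hb2 : 0 ≤ b 2 := hneg 2 (by norm_num)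
  have pos2 : 0 < b 2 := by
    rcases hb2.eq_or_lt with h | h
    · exfalso
      have hb1ne : b 1 ≠ 0 := fun h1' => hnz ⟨h1', h.symm⟩
      have hb1pos : 0 < b 1 := lt_of_le_of_ne hb1 (Ne.symm hb1ne)
      have h3 := hrec 2 le_rfl
      norm_num at h3
      have hb3 : 0 ≤ b 3 := hneg 3 (by norm_num)
      nlinarith [mul_pos hq0 hb1pos]
    · exact h
  -- all b (n+2) > 0
  have pos : ∀ n : ℕ, 0 < b (n + 2) := by
    intro n
    induction n with
    | zero => exact pos2
    | succ k ih =>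
      have h1' : 0 ≤ b (k + 3) := hneg _ (by omega)
      rcases h1'.eq_or_lt with h | h
      · exfalso
        have hr := hrec (k + 3) (by omega)
        have hsub : k + 3 - 1 = k + 2 := by omega
        rw [hsub] at hr
        have hb4 : 0 ≤ b (k + 3 + 1) := hneg _ (by omega)
        rw [hr, ← h] at hb4
        nlinarith [mul_pos hq0 ih]
      · exact h
  obtain ⟨r, hrdef⟩ : ∃ r : ℕ → ℝ, (fun n => b (n + 3) / b (n + 2)) = r := ⟨_, rfl⟩
  have hrval : ∀ n, r n = b (n + 3) / b (n + 2) := fun n => by rw [← hrdef]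
  have hrpos : ∀ n, 0 < r n := by
    intro n
    rw [hrval]
    exact div_pos (pos (n + 1)) (pos n)
  have hrstep : ∀ n, r (n + 1) = p - q / r n := by
    intro n
    have hb2' : b (n + 2) ≠ 0 := (pos n).ne'
    have hb3' : b (n + 3) ≠ 0 := (pos (n + 1)).ne'
    have hr := hrec (n + 3) (by omega)
    have hsub : n + 3 - 1 = n + 2 := by omega
    rw [hsub] at hr
    rw [hrval, hrval]
    have he1 : n + 1 + 3 = n + 3 + 1 := by omega
    have he2 : n + 1 + 2 = n + 3 := by omega
    rw [he1, he2, hr]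
    field_simp
  have hrlt : ∀ n, r (n + 1) < p := by
    intro n
    have := hrstep n
    have hdp : 0 < q / r n := div_pos hq0 (hrpos n)
    linarith
  -- decrement step
  have hdecstep : ∀ n, r n < p → r (n + 1) ≤ r n - m / p := by
    intro n hxp
    have hx : 0 < r n := hrpos n
    have h1' : m * r n ≤ p * (r n ^ 2 - p * r n + q) := by
      nlinarith [mul_nonneg hp0.le (sq_nonneg (r n - p / 2)),
        mul_lt_mul_of_pos_left hxp hm, hmdef]
    have h2' : m / p ≤ (r n ^ 2 - p * r n + q) / r n := by
      rw [div_le_div_iff₀ hp0 hx]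
      linarith
    have h3' : (r n ^ 2 - p * r n + q) / r n = r n - p + q / r n := by
      field_simp
    rw [hrstep n]
    rw [h3'] at h2'
    linarith
  -- linear decay
  have hdec : ∀ k : ℕ, r (k + 1) ≤ r 1 - k * (m / p) := by
    intro k
    induction k with
    | zero => simp
    | succ k ih =>
      have hlt : r (k + 1) < p := hrlt k
      have := hdecstep (k + 1) hlt
      push_cast
      push_cast at ih
      linarith
  have hd : 0 < m / p := div_pos hm hp0
  obtain ⟨k, hk⟩ := exists_nat_gt (r 1 / (m / p))
  have hk' : r 1 < k * (m / p) := by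
    rw [div_lt_iff₀ hd] at hk
    linarith
  linarith [hdec k, hrpos (k + 1)]
end
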